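/- For every n ≥ 1 and every R > 1, W_m^* tends to +∞ uniformly on { x ∈ ℝ^n : ‖x‖ ≥ R } as m → ∞; that is, for every C ∈ ℝ there exists m₀ > 0 such that W_m^*(x) ≥ C whenever m ≥ m₀ and ‖x‖ ≥ R. -/

import Mathlib

/-!
Testing the supremum defining `W_m^*(x)` at `p = t • x / ‖x‖` and bounding
`W_m(p) ≤ ‖p‖ + m⁻¹ (1 + ‖p‖²)` gives `W_m^*(x) ≥ t (‖x‖ - 1) - m⁻¹ (1 + t²)`.
On `‖x‖ ≥ R > 1` the first term is made large by choosing `t`, and the second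
is then at most `1` once `m ≥ 1 + t²`.
-/

noncomputable section

/-- The regularized energy density `W_m(p) = (‖p‖² + m⁻²)^{1/2} + m⁻¹‖p‖²`. -/
def Wfun (n : ℕ) (m : ℝ) (p : EuclideanSpace ℝ (Fin n)) : ℝ :=
  Real.sqrt (‖p‖ ^ 2 + m⁻¹ ^ 2) + m⁻¹ * ‖p‖ ^ 2

/-- The Legendre–Fenchel conjugate `W_m^*(x) = sup_p (⟨p,x⟩ - W_m(p))`. -/
def Wstar (n : ℕ) (m : ℝ) (x : EuclideanSpace ℝ (Fin n)) : ℝ :=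
  sSup (Set.range fun p => (inner ℝ p x : ℝ) - Wfun n m p)

section

variable {n : ℕ} {m : ℝ}

lemma Wfun_le (hm : 0 ≤ m) (p : EuclideanSpace ℝ (Fin n)) :
    Wfun n m p ≤ ‖p‖ + m⁻¹ * (1 + ‖p‖ ^ 2) := by
  have hm' : 0 ≤ m⁻¹ := inv_nonneg.mpr hm
  have hsqrt : Real.sqrt (‖p‖ ^ 2 + m⁻¹ ^ 2) ≤ ‖p‖ + m⁻¹ :=
    (Real.sqrt_le_left (by positivity)).mpr (by nlinarith [norm_nonneg p])
  rw [Wfun]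
  linarith

/-- Completing the square: `⟪p, x⟫ - W_m(p) ≤ ‖p‖‖x‖ - m⁻¹‖p‖² ≤ m‖x‖²/4`. -/
lemma bddAbove_range_inner_sub_Wfun (hm : 0 < m) (x : EuclideanSpace ℝ (Fin n)) :
    BddAbove (Set.range fun p => (inner ℝ p x : ℝ) - Wfun n m p) := by
  refine ⟨m * ‖x‖ ^ 2 / 4, ?_⟩
  rintro _ ⟨p, rfl⟩
  have hinner : (inner ℝ p x : ℝ) ≤ ‖p‖ * ‖x‖ := real_inner_le_norm p x
  have hsqrt : 0 ≤ Real.sqrt (‖p‖ ^ 2 + m⁻¹ ^ 2) := Real.sqrt_nonneg _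
  have hmm : m * m⁻¹ = 1 := mul_inv_cancel₀ hm.ne'
  have hm' : 0 < m⁻¹ := inv_pos.mpr hm
  unfold Wfun
  nlinarith [mul_nonneg hm'.le (sq_nonneg (‖p‖ - m * ‖x‖ / 2))]

lemma inner_sub_Wfun_le_Wstar (hm : 0 < m) (p x : EuclideanSpace ℝ (Fin n)) :
    (inner ℝ p x : ℝ) - Wfun n m p ≤ Wstar n m x :=
  le_csSup (bddAbove_range_inner_sub_Wfun hm x) ⟨p, rfl⟩

lemma le_Wstar_of_ne_zero (hm : 0 < m) {t : ℝ} (ht : 0 ≤ t) {x : EuclideanSpace ℝ (Fin n)}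
    (hx : x ≠ 0) : t * (‖x‖ - 1) - m⁻¹ * (1 + t ^ 2) ≤ Wstar n m x := by
  have hx' : 0 < ‖x‖ := norm_pos_iff.mpr hx
  set p : EuclideanSpace ℝ (Fin n) := (t / ‖x‖) • x
  have hinner : (inner ℝ p x : ℝ) = t * ‖x‖ := by
    rw [real_inner_smul_left, real_inner_self_eq_norm_sq]
    field_simp
  have hnorm : ‖p‖ = t := by
    rw [norm_smul, Real.norm_eq_abs, abs_div, abs_of_nonneg ht, abs_of_pos hx']
    field_simp
  calc t * (‖x‖ - 1) - m⁻¹ * (1 + t ^ 2)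
      ≤ (inner ℝ p x : ℝ) - (‖p‖ + m⁻¹ * (1 + ‖p‖ ^ 2)) := by
        rw [hinner, hnorm]; linarith
    _ ≤ (inner ℝ p x : ℝ) - Wfun n m p := by gcongr; exact Wfun_le hm.le p
    _ ≤ Wstar n m x := inner_sub_Wfun_le_Wstar hm p x

end

theorem Wstar_tendsto_top_general (n : ℕ) (R : ℝ) (hR : 1 < R) :
    ∀ C : ℝ, ∃ m₀ > (0 : ℝ), ∀ m ≥ m₀, ∀ x : EuclideanSpace ℝ (Fin n), R ≤ ‖x‖ →
      C ≤ Wstar n m x := by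
  intro C
  set t : ℝ := (|C| + 1) / (R - 1)
  have ht : 0 ≤ t := div_nonneg (by positivity) (by linarith)
  have htR : t * (R - 1) = |C| + 1 := div_mul_cancel₀ _ (by linarith)
  refine ⟨1 + t ^ 2, by positivity, fun m hm x hx => ?_⟩
  have hm0 : 0 < m := lt_of_lt_of_le (by positivity) hm
  have hsmall : m⁻¹ * (1 + t ^ 2) ≤ 1 := by rwa [inv_mul_le_iff₀ hm0, mul_one]
  have hlarge : |C| + 1 ≤ t * (‖x‖ - 1) := by rw [← htR]; gcongr
  have hWstar := le_Wstar_of_ne_zero hm0 ht (norm_pos_iff.mp (by linarith) : x ≠ 0)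
  linarith [le_abs_self C]

/-- `W_m^* → +∞` uniformly on `{‖x‖ ≥ R}` for any `R > 1` as `m → ∞`. -/
theorem Wstar_tendsto_top (n : ℕ) (hn : 1 ≤ n) (R : ℝ) (hR : 1 < R) :
    ∀ C : ℝ, ∃ m₀ > (0 : ℝ), ∀ m ≥ m₀, ∀ x : EuclideanSpace ℝ (Fin n), R ≤ ‖x‖ →
      C ≤ Wstar n m x :=
  Wstar_tendsto_top_general n R hR
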